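/- arXiv:1008.4819 — 4 statements merged into one kernel-verified Lean document; each statement's English description precedes it below -/
import Mathlib

section
/- Let E be a finite-dimensional real inner product space equipped with Lebesgue measure, let v : E → E be a continuously differentiable vector field whose divergence vanishes identically (trace of the total derivative of v is 0 at every point), and let φ : ℝ × E → E be a flow such that φ(0,·) is the identity, (t,x) ↦ φ(t,x) is continuously differentiable, ∂φ/∂t(t,x) = v(φ(t,x)) for all t and x, and for each t the map φ(t,·) : E → E is a bijection. Then for every measurable set U ⊆ E and every t ∈ ℝ, the Lebesgue measure of φ(t, U) equals the Lebesgue measure of U (Liouville's theorem: volume in phase space is preserved under the flow). -/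
/-! Since `φ` is only `C¹`, the spatial derivative `D t x` of `φ (t, ·)` is not differentiated in
`t` directly: differentiating the integral equation `φ (t, x) = x + ∫₀ᵗ v (φ (s, x)) ds` under the
integral sign shows that it solves the variational equation `∂ₜ D = Dv (φ (t, x)) ∘ D`. Jacobi's
formula then gives `∂ₜ det D = tr Dv · det D = 0`, so `det D = det D(0) = 1`, and the change of
variables formula yields `vol (φ (t, ·) '' U) = ∫_U |det D| = vol U`. -/

open MeasureTheory

namespace Matrix

variable {𝕜 : Type*} [NontriviallyNormedField 𝕜] {n : Type*} [Fintype n] [DecidableEq n]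

theorem norm_det_le_prod_norm_row (M : Matrix n n 𝕜) :
    ‖M.det‖ ≤ (Fintype.card n).factorial * ∏ i, ‖M i‖ := by
  have hterm : ∀ σ : Equiv.Perm n, ‖σ.sign • ∏ i, M (σ i) i‖ ≤ ∏ i, ‖M i‖ := fun σ =>
    calc ‖σ.sign • ∏ i, M (σ i) i‖ = ∏ i, ‖M (σ i) i‖ := by rw [norm_units_zsmul, norm_prod]
      _ ≤ ∏ i, ‖M (σ i)‖ :=
        Finset.prod_le_prod (fun _ _ => norm_nonneg _) fun i _ => norm_le_pi_norm (M (σ i)) i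
      _ = ∏ i, ‖M i‖ := Equiv.prod_comp σ fun i => ‖M i‖
  calc ‖M.det‖ ≤ ∑ σ : Equiv.Perm n, ‖σ.sign • ∏ i, M (σ i) i‖ := by
        rw [det_apply]; exact norm_sum_le _ _
    _ ≤ ∑ _σ : Equiv.Perm n, ∏ i, ‖M i‖ := Finset.sum_le_sum fun σ _ => hterm σ
    _ = (Fintype.card n).factorial * ∏ i, ‖M i‖ := by
        rw [Finset.sum_const, Finset.card_univ, Fintype.card_perm, nsmul_eq_mul]

variable (𝕜 n) in
noncomputable def detContinuousMultilinearMap :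
    ContinuousMultilinearMap 𝕜 (fun _ : n => n → 𝕜) 𝕜 :=
  detRowAlternating.toMultilinearMap.mkContinuous _ fun M => norm_det_le_prod_norm_row (of M)

theorem hasDerivAt_det {M : 𝕜 → Matrix n n 𝕜} {M' : Matrix n n 𝕜} {t : 𝕜}
    (h : ∀ i, HasDerivAt (fun s => M s i) (M' i) t) :
    HasDerivAt (fun s => (M s).det) (∑ i, ((M t).updateRow i (M' i)).det) t := by
  have := HasFDerivAt.multilinear_comp (detContinuousMultilinearMap 𝕜 n)
    (fun i => (h i).hasFDerivAt)
  refine HasDerivAt.congr_deriv this.hasDerivAt ?_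
  simp only [FunLike.coe_sum, Finset.sum_apply, ContinuousLinearMap.comp_apply,
    ContinuousLinearMap.toSpanSingleton_apply, one_smul,
    ContinuousMultilinearMap.toContinuousLinearMap_apply]
  rfl

theorem sum_det_updateRow_mul (B M : Matrix n n 𝕜) :
    ∑ i, (M.updateRow i ((B * M) i)).det = B.trace * M.det := by
  have hrow : ∀ i, (B * M) i = ∑ j, B i j • M j := fun i => by
    ext k; simp [mul_apply, Finset.sum_apply]
  simp only [hrow, det_updateRow_sum, smul_eq_mul, trace, diag, Finset.sum_mul]

end Matrix

namespace ContinuousLinearMap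

variable {𝕜 : Type*} [NontriviallyNormedField 𝕜] [CompleteSpace 𝕜] {E : Type*}
  [NormedAddCommGroup E] [NormedSpace 𝕜 E] [FiniteDimensional 𝕜 E]

theorem hasDerivAt_det_of_hasDerivAt_comp {A : 𝕜 → E →L[𝕜] E} {B : E →L[𝕜] E} {t : 𝕜}
    (h : HasDerivAt A (B ∘L A t) t) :
    HasDerivAt (fun s => (A s).det) (LinearMap.trace 𝕜 E B * (A t).det) t := by
  classical
  let b := Module.finBasis 𝕜 E
  let toMatrixRow (i) : (E →L[𝕜] E) →L[𝕜] (Fin _ → 𝕜) := LinearMap.toContinuousLinearMap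
    ((LinearMap.proj i).comp ((LinearMap.toMatrix b b).toLinearMap.comp (coeLM 𝕜)))
  have hrow : ∀ i, HasDerivAt (fun s => LinearMap.toMatrix b b (A s) i)
      ((LinearMap.toMatrix b b B * LinearMap.toMatrix b b (A t)) i) t := fun i => by
    refine ((toMatrixRow i).hasFDerivAt.comp_hasDerivAt t h).congr_deriv ?_
    change LinearMap.toMatrix b b (B ∘L A t : E →ₗ[𝕜] E) i = _
    rw [toLinearMap_comp, LinearMap.toMatrix_comp b b b]
  simpa only [Matrix.sum_det_updateRow_mul, ← LinearMap.trace_eq_matrix_trace,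
    LinearMap.det_toMatrix] using Matrix.hasDerivAt_det hrow

end ContinuousLinearMap

theorem continuous_fderiv_comp_prodMk {𝕜 H E F : Type*} [NontriviallyNormedField 𝕜]
    [NormedAddCommGroup H] [NormedSpace 𝕜 H] [NormedAddCommGroup E] [NormedSpace 𝕜 E]
    [NormedAddCommGroup F] [NormedSpace 𝕜 F] {f : H × E → F} (hf : ContDiff 𝕜 1 f) :
    Continuous fun p : H × E => fderiv 𝕜 (fun y => f (p.1, y)) p.2 :=
  (ContDiff.fderiv (f := fun p y => f (p.1, y)) (hf.comp (contDiff_fst.fst.prodMk contDiff_snd))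
    contDiff_snd (zero_add 1).le).continuous

section Flow

variable {E : Type*} [NormedAddCommGroup E] [NormedSpace ℝ E] {v : E → E} {φ : ℝ × E → E}

theorem continuous_fderiv_comp_fderiv_slice (hv : ContDiff ℝ 1 v) (hφ : ContDiff ℝ 1 φ) :
    Continuous fun p : ℝ × E => fderiv ℝ v (φ p) ∘L fderiv ℝ (fun y => φ (p.1, y)) p.2 :=
  ((hv.continuous_fderiv one_ne_zero).comp hφ.continuous).clm_comp
    (continuous_fderiv_comp_prodMk hφ)

theorem flow_eq_add_integral [CompleteSpace E] (hv : Continuous v) (hφ : Continuous φ)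
    (h0 : ∀ x, φ (0, x) = x) (hflow : ∀ t x, HasDerivAt (fun τ => φ (τ, x)) (v (φ (t, x))) t)
    (t : ℝ) (x : E) :
    φ (t, x) = x + ∫ s in (0 : ℝ)..t, v (φ (s, x)) := by
  have hcont : Continuous fun s : ℝ => v (φ (s, x)) := by fun_prop
  rw [intervalIntegral.integral_eq_sub_of_hasDerivAt (fun s _ => hflow s x)
    (hcont.intervalIntegrable 0 t), h0]
  abel

theorem fderiv_flow_eq_id_add_integral [FiniteDimensional ℝ E] (hv : ContDiff ℝ 1 v)
    (hφ : ContDiff ℝ 1 φ) (h0 : ∀ x, φ (0, x) = x)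
    (hflow : ∀ t x, HasDerivAt (fun τ => φ (τ, x)) (v (φ (t, x))) t) (t : ℝ) (x : E) :
    fderiv ℝ (fun y => φ (t, y)) x = ContinuousLinearMap.id ℝ E +
      ∫ s in (0 : ℝ)..t, fderiv ℝ v (φ (s, x)) ∘L fderiv ℝ (fun y => φ (s, y)) x := by
  have hslice : ∀ s y, HasFDerivAt (fun y => φ (s, y)) (fderiv ℝ (fun y => φ (s, y)) y) y :=
    fun s y => ((hφ.comp (contDiff_prodMk_right s)).differentiable one_ne_zero y).hasFDerivAt
  have hcont := continuous_fderiv_comp_fderiv_slice hv hφ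
  obtain ⟨C, hC⟩ := ((isCompact_uIcc (a := (0 : ℝ)) (b := t)).prod
    (isCompact_closedBall x 1)).exists_bound_of_continuousOn hcont.continuousOn
  have hvφ : ∀ y, Continuous fun s => v (φ (s, y)) := fun y =>
    hv.continuous.comp (hφ.continuous.comp (continuous_id.prodMk continuous_const))
  have hintegral := intervalIntegral.hasFDerivAt_integral_of_dominated_of_fderiv_le
    (μ := volume) (F := fun y s => v (φ (s, y)))
    (F' := fun y s => fderiv ℝ v (φ (s, y)) ∘L fderiv ℝ (fun z => φ (s, z)) y)
    (bound := fun _ => C) (Metric.ball_mem_nhds x one_pos)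
    (.of_forall fun y => (hvφ y).aestronglyMeasurable) ((hvφ x).intervalIntegrable 0 t)
    (hcont.comp (continuous_id.prodMk continuous_const)).aestronglyMeasurable
    (.of_forall fun s hs y hy =>
      hC (s, y) ⟨Set.uIoc_subset_uIcc hs, Metric.ball_subset_closedBall hy⟩)
    intervalIntegrable_const
    (.of_forall fun s _ y _ =>
      ((hv.differentiable one_ne_zero _).hasFDerivAt).comp y (hslice s y))
  refine HasFDerivAt.fderiv ?_
  rw [funext (flow_eq_add_integral hv.continuous hφ.continuous h0 hflow t)]
  exact (hasFDerivAt_id x).add hintegral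

theorem hasDerivAt_fderiv_flow [FiniteDimensional ℝ E] (hv : ContDiff ℝ 1 v)
    (hφ : ContDiff ℝ 1 φ) (h0 : ∀ x, φ (0, x) = x)
    (hflow : ∀ t x, HasDerivAt (fun τ => φ (τ, x)) (v (φ (t, x))) t) (t : ℝ) (x : E) :
    HasDerivAt (fun τ => fderiv ℝ (fun y => φ (τ, y)) x)
      (fderiv ℝ v (φ (t, x)) ∘L fderiv ℝ (fun y => φ (t, y)) x) t := by
  have hcont : Continuous fun s => fderiv ℝ v (φ (s, x)) ∘L fderiv ℝ (fun y => φ (s, y)) x :=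
    (continuous_fderiv_comp_fderiv_slice hv hφ).comp (continuous_id.prodMk continuous_const)
  rw [funext fun τ => fderiv_flow_eq_id_add_integral hv hφ h0 hflow τ x]
  exact ((hcont.integral_hasStrictDerivAt 0 t).hasDerivAt).const_add _

theorem det_fderiv_flow_eq_one [FiniteDimensional ℝ E] (hv : ContDiff ℝ 1 v)
    (hdiv : ∀ x, LinearMap.trace ℝ E (fderiv ℝ v x).toLinearMap = 0)
    (hφ : ContDiff ℝ 1 φ) (h0 : ∀ x, φ (0, x) = x)
    (hflow : ∀ t x, HasDerivAt (fun τ => φ (τ, x)) (v (φ (t, x))) t) (t : ℝ) (x : E) :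
    (fderiv ℝ (fun y => φ (t, y)) x).det = 1 := by
  have hderiv : ∀ s, HasDerivAt (fun τ => (fderiv ℝ (fun y => φ (τ, y)) x).det) 0 s := fun s => by
    simpa [hdiv] using ContinuousLinearMap.hasDerivAt_det_of_hasDerivAt_comp
      (hasDerivAt_fderiv_flow hv hφ h0 hflow s x)
  have hinit : fderiv ℝ (fun y => φ (0, y)) x = ContinuousLinearMap.id ℝ E := by
    simp only [h0, fderiv_fun_id]
  calc (fderiv ℝ (fun y => φ (t, y)) x).det = (fderiv ℝ (fun y => φ (0, y)) x).det :=
        is_const_of_deriv_eq_zero (fun s => (hderiv s).differentiableAt)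
          (fun s => (hderiv s).deriv) t 0
    _ = 1 := by rw [hinit]; exact LinearMap.det_id

end Flow

theorem addHaar_image_eq_of_det_fderiv_eq_one {E : Type*} [NormedAddCommGroup E]
    [NormedSpace ℝ E] [FiniteDimensional ℝ E] [MeasurableSpace E] [BorelSpace E]
    (μ : Measure E) [μ.IsAddHaarMeasure] {f : E → E} {s : Set E} (hs : MeasurableSet s)
    (hf : Differentiable ℝ f) (hdet : ∀ x, (fderiv ℝ f x).det = 1) (hinj : Set.InjOn f s) :
    μ (f '' s) = μ s := by
  rw [← lintegral_abs_det_fderiv_eq_addHaar_image μ hs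
    (fun x _ => (hf x).hasFDerivAt.hasFDerivWithinAt) hinj]
  simp [hdet]

/-- **Liouville's theorem.** If `v` is a `C¹` divergence-free vector field
on a finite-dimensional real inner product space `E` (equipped with its Lebesgue measure),
and `φ` is a `C¹` flow for `v` with `φ (0, ·) = id` and each `φ (t, ·)` bijective, then the
flow preserves the Lebesgue measure of every measurable set. -/
theorem liouville_volume_preserving
    {E : Type*} [NormedAddCommGroup E] [InnerProductSpace ℝ E]
    [FiniteDimensional ℝ E] [MeasurableSpace E] [BorelSpace E]
    (v : E → E) (hv : ContDiff ℝ 1 v)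
    (hdiv : ∀ x, LinearMap.trace ℝ E (fderiv ℝ v x).toLinearMap = 0)
    (φ : ℝ × E → E)
    (h0 : ∀ x, φ (0, x) = x)
    (hφ : ContDiff ℝ 1 φ)
    (hflow : ∀ t x, HasDerivAt (fun τ => φ (τ, x)) (v (φ (t, x))) t)
    (hbij : ∀ t : ℝ, Function.Bijective fun x => φ (t, x)) :
    ∀ U : Set E, MeasurableSet U → ∀ t : ℝ,
      volume ((fun x => φ (t, x)) '' U) = volume U := by
  intro U hU t
  exact addHaar_image_eq_of_det_fderiv_eq_one volume hU
    ((hφ.comp (contDiff_prodMk_right t)).differentiable one_ne_zero)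
    (det_fderiv_flow_eq_one hv hdiv hφ h0 hflow t) (hbij t).injective.injOn
end

section
/- (Strong law of action and reaction.) Consider N particles with masses m_α > 0 and twice differentiable trajectories x_α : ℝ → ℝ³, external forces f_α^{ext}(t) ∈ ℝ³ and interaction force contributions f_{αβ}(t) ∈ ℝ³ for α ≠ β satisfying f_{αβ} = −f_{βα}. Fix a point x₀ ∈ ℝ³. Suppose that at every time t: (i) for every particle α, f_α^{ext} + Σ_{γ≠α} f_{αγ} = m_α ẍ_α; and (ii) for every pair of distinct particles α, β, the balance of angular momentum about x₀ holds for the part {α,β}: (x_α − x₀) × ( f_α^{ext} + Σ_{γ≠α,β} f_{αγ} ) + (x_β − x₀) × ( f_β^{ext} + Σ_{γ≠β,α} f_{βγ} ) = d/dt [ (x_α − x₀) × m_α ẋ_α + (x_β − x₀) × m_β ẋ_β ]. Then (x_α(t) − x_β(t)) × f_{αβ}(t) = 0 for all distinct α, β and all t; that is, each f_{αβ} is parallel to the line joining particles α and β. -/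
/-!
Write `L_δ = (x_δ - x₀) × m_δ ẋ_δ` for the angular momentum of particle `δ`. Since
`ẋ_δ × ẋ_δ = 0`, its derivative is `(x_δ - x₀) × m_δ ẍ_δ`, which by the balance of linear
momentum is `(x_δ - x₀) × (f_δ^ext + Σ_{γ ≠ δ} f_{δγ})`. Subtracting the balance of angular
momentum for the part `{α, β}` leaves `(x_α - x₀) × f_{αβ} + (x_β - x₀) × f_{βα} = 0`, and the
weak law turns this into `(x_α - x_β) × f_{αβ} = 0`.
-/

open Finset Matrix

section

variable {𝕜 : Type*} [NontriviallyNormedField 𝕜] [CompleteSpace 𝕜]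

theorem HasDerivAt.cross {u v : 𝕜 → Fin 3 → 𝕜} {u' v' : Fin 3 → 𝕜} {t : 𝕜}
    (hu : HasDerivAt u u' t) (hv : HasDerivAt v v' t) :
    HasDerivAt (fun τ => u τ ⨯₃ v τ) (u' ⨯₃ v t + u t ⨯₃ v') t := by
  rw [add_comm]
  exact (crossProduct : (Fin 3 → 𝕜) →ₗ[𝕜] _ →ₗ[𝕜] _).toContinuousBilinearMap
    |>.hasDerivAt_of_bilinear (fun _ => hu) (fun _ => hv)

theorem hasDerivAt_cross_smul_deriv {x : 𝕜 → Fin 3 → 𝕜} {t : 𝕜} (x₀ : Fin 3 → 𝕜) (m : 𝕜)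
    (hx : DifferentiableAt 𝕜 x t) (hx' : DifferentiableAt 𝕜 (deriv x) t) :
    HasDerivAt (fun τ => (x τ - x₀) ⨯₃ (m • deriv x τ))
      ((x t - x₀) ⨯₃ (m • deriv (deriv x) t)) t := by
  simpa [cross_self] using (hx.hasDerivAt.sub_const x₀).cross (hx'.hasDerivAt.const_smul m)

end

theorem strong_law_action_reaction_general
    (N : ℕ) (m : Fin N → ℝ)
    (x : Fin N → ℝ → (Fin 3 → ℝ))
    (hx : ∀ α, Differentiable ℝ (x α) ∧ Differentiable ℝ (deriv (x α)))
    (fext : Fin N → ℝ → (Fin 3 → ℝ))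
    (fint : Fin N → Fin N → ℝ → (Fin 3 → ℝ))
    (hweak : ∀ (t : ℝ) (α β : Fin N), α ≠ β → fint α β t = -fint β α t)
    (x₀ : Fin 3 → ℝ)
    (hone : ∀ (t : ℝ) (α : Fin N),
      fext α t + ∑ γ ∈ Finset.univ.erase α, fint α γ t
        = m α • deriv (deriv (x α)) t)
    (hang : ∀ (t : ℝ) (α β : Fin N), α ≠ β →
      crossProduct (x α t - x₀)
          (fext α t + ∑ γ ∈ (Finset.univ.erase α).erase β, fint α γ t)
        + crossProduct (x β t - x₀)
          (fext β t + ∑ γ ∈ (Finset.univ.erase β).erase α, fint β γ t)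
        = deriv (fun τ =>
            crossProduct (x α τ - x₀) (m α • deriv (x α) τ)
              + crossProduct (x β τ - x₀) (m β • deriv (x β) τ)) t) :
    ∀ (t : ℝ) (α β : Fin N), α ≠ β →
      crossProduct (x α t - x β t) (fint α β t) = 0 := by
  intro t α β hαβ
  have hL (δ : Fin N) : HasDerivAt (fun τ => (x δ τ - x₀) ⨯₃ (m δ • deriv (x δ) τ))
      ((x δ t - x₀) ⨯₃ (fext δ t + ∑ γ ∈ univ.erase δ, fint δ γ t)) t := by
    rw [hone]
    exact hasDerivAt_cross_smul_deriv x₀ (m δ) ((hx δ).1 t) ((hx δ).2 t)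
  have hpair := (hang t α β hαβ).trans ((hL α).add (hL β)).deriv
  -- split `f_{αβ}` and `f_{βα}` off the full interaction sums
  rw [← sum_erase_add _ _ (mem_erase.2 ⟨hαβ.symm, mem_univ β⟩),
    ← sum_erase_add _ _ (mem_erase.2 ⟨hαβ, mem_univ α⟩), hweak t β α hαβ.symm] at hpair
  simp only [map_add, map_neg, map_sub, LinearMap.sub_apply] at hpair ⊢
  linear_combination -hpair

/-- **Strong law of action and reaction.** Given the weak law
`f_{αβ} = −f_{βα}`, the balance of linear momentum for every single particle, and the
balance of angular momentum about a fixed point `x₀` for every two-particle part, each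
interaction force contribution `f_{αβ}` is parallel to the line joining particles `α`
and `β`: `(x_α − x_β) × f_{αβ} = 0`. -/
theorem strong_law_action_reaction
    (N : ℕ) (m : Fin N → ℝ) (hm : ∀ α, 0 < m α)
    (x : Fin N → ℝ → (Fin 3 → ℝ))
    (hx : ∀ α, Differentiable ℝ (x α) ∧ Differentiable ℝ (deriv (x α)))
    (fext : Fin N → ℝ → (Fin 3 → ℝ))
    (fint : Fin N → Fin N → ℝ → (Fin 3 → ℝ))
    (hweak : ∀ (t : ℝ) (α β : Fin N), α ≠ β → fint α β t = -fint β α t)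
    (x₀ : Fin 3 → ℝ)
    (hone : ∀ (t : ℝ) (α : Fin N),
      fext α t + ∑ γ ∈ Finset.univ.erase α, fint α γ t
        = m α • deriv (deriv (x α)) t)
    (hang : ∀ (t : ℝ) (α β : Fin N), α ≠ β →
      crossProduct (x α t - x₀)
          (fext α t + ∑ γ ∈ (Finset.univ.erase α).erase β, fint α γ t)
        + crossProduct (x β t - x₀)
          (fext β t + ∑ γ ∈ (Finset.univ.erase β).erase α, fint β γ t)
        = deriv (fun τ =>
            crossProduct (x α τ - x₀) (m α • deriv (x α) τ)
              + crossProduct (x β τ - x₀) (m β • deriv (x β) τ)) t) :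
    ∀ (t : ℝ) (α β : Fin N), α ≠ β →
      crossProduct (x α t - x β t) (fint α β t) = 0 :=
  strong_law_action_reaction_general N m x hx fext fint hweak x₀ hone hang
end

section
/- (The Hardy stress satisfies the pointwise force balance.) Let ι be a finite index set, let x : ι → ℝ³ be particle positions, let f : ι × ι → ℝ³ satisfy f(α,β) = −f(β,α) for α ≠ β, and let w : ℝ³ → ℝ be continuously differentiable. Define the bond function b(x̄; u, v) := ∫₀¹ w((1−s)u + s v − x̄) ds and the Hardy stress field σ(x̄) := (1/2) Σ_{α≠β} [ −f(α,β) ⊗ (x_α − x_β) ] b(x̄; x_α, x_β), a matrix-valued field of x̄ ∈ ℝ³. Then for every x̄ ∈ ℝ³, div σ(x̄) = Σ_{α≠β} w(x_α − x̄) f(α,β). -/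
/-! Bond by bond, the divergence of `b(x̄; x_α, x_β) (−f(α,β) ⊗ (x_α − x_β))` is `−f(α,β)` times
the derivative of `b(·; x_α, x_β)` in the direction `x_α − x_β`. Differentiating under the
integral, the derivative of the integrand in `x̄` along `x_α − x_β` is its derivative in `s`, so
by the fundamental theorem of calculus the directional derivative is the difference of endpoint
values `w(x_β − x̄) − w(x_α − x̄)`. Antisymmetry of `f` makes the two
resulting sums over ordered pairs equal, which cancels the factor `1/2`. -/

open MeasureTheory

/-- The divergence of a matrix-valued field `T`, the vector field with components
`(div T)ᵢ = Σⱼ ∂Tᵢⱼ/∂xⱼ`. -/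
noncomputable def matDiv (T : (Fin 3 → ℝ) → Matrix (Fin 3) (Fin 3) ℝ)
    (x : Fin 3 → ℝ) : Fin 3 → ℝ :=
  fun i => ∑ j, fderiv ℝ (fun y => T y i j) x (Pi.single j 1)

/-- The bond function `b(xv; u, v) = ∫₀¹ w((1−s)u + sv − xv) ds`. -/
noncomputable def bondFunction (w : (Fin 3 → ℝ) → ℝ) (xb u v : Fin 3 → ℝ) : ℝ :=
  ∫ s in (0:ℝ)..1, w ((1 - s) • u + s • v - xb)

section IntervalIntegral

variable {E F : Type*} [NormedAddCommGroup E] [NormedSpace ℝ E]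
  [NormedAddCommGroup F] [NormedSpace ℝ F] {w : E → F}

theorem hasFDerivAt_intervalIntegral_comp_sub [ProperSpace E] (hw : ContDiff ℝ 1 w)
    {γ : ℝ → E} (hγ : Continuous γ) (a b : ℝ) (x₀ : E) :
    HasFDerivAt (fun x => ∫ s in a..b, w (γ s - x)) (∫ s in a..b, -fderiv ℝ w (γ s - x₀)) x₀ := by
  have hdw : Continuous (fderiv ℝ w) := hw.continuous_fderiv one_ne_zero
  have hγx (x : E) : Continuous fun s => γ s - x := hγ.sub continuous_const
  obtain ⟨C, hC⟩ : ∃ C, ∀ p ∈ Set.uIcc a b ×ˢ Metric.closedBall x₀ 1,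
      ‖fderiv ℝ w (γ p.1 - p.2)‖ ≤ C :=
    (isCompact_uIcc.prod (isCompact_closedBall x₀ 1)).exists_bound_of_continuousOn
      (hdw.comp ((hγ.comp continuous_fst).sub continuous_snd)).continuousOn
  refine intervalIntegral.hasFDerivAt_integral_of_dominated_of_fderiv_le (bound := fun _ => C)
    (F' := fun x s => -fderiv ℝ w (γ s - x)) (Metric.ball_mem_nhds x₀ one_pos)
    (.of_forall fun x => (hw.continuous.comp (hγx x)).aestronglyMeasurable)
    ((hw.continuous.comp (hγx x₀)).intervalIntegrable a b)
    (hdw.comp (hγx x₀)).neg.aestronglyMeasurable ?_ intervalIntegrable_const ?_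
  · refine .of_forall fun s hs x hx => ?_
    rw [norm_neg]
    exact hC (s, x) ⟨Set.uIoc_subset_uIcc hs, Metric.ball_subset_closedBall hx⟩
  · refine .of_forall fun s _ x _ => ?_
    exact ((hw.differentiable one_ne_zero _).hasFDerivAt.comp x
      ((hasFDerivAt_id x).const_sub (γ s))).congr_fderiv (by ext; simp)

theorem integral_fderiv_apply_eq_sub_of_hasDerivAt [CompleteSpace F] (hw : ContDiff ℝ 1 w)
    {γ γ' : ℝ → E} (hγ : ∀ s, HasDerivAt γ (γ' s) s) (hγ' : Continuous γ') (a b : ℝ) :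
    ∫ s in a..b, fderiv ℝ w (γ s) (γ' s) = w (γ b) - w (γ a) := by
  have hγc : Continuous γ := continuous_iff_continuousAt.2 fun s => (hγ s).continuousAt
  exact intervalIntegral.integral_eq_sub_of_hasDerivAt
    (fun s _ => (hw.differentiable one_ne_zero _).hasFDerivAt.comp_hasDerivAt s (hγ s))
    ((((hw.continuous_fderiv one_ne_zero).comp hγc).clm_apply hγ').intervalIntegrable a b)

end IntervalIntegral

section MatDiv

theorem matDiv_const_smul (c : ℝ) (T : (Fin 3 → ℝ) → Matrix (Fin 3) (Fin 3) ℝ)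
    (x : Fin 3 → ℝ) : matDiv (fun y => c • T y) x = c • matDiv T x := by
  ext i
  simp only [matDiv, Matrix.smul_apply, Pi.smul_apply, Finset.smul_sum]
  refine Finset.sum_congr rfl fun j _ => ?_
  rw [show (fun y => c • T y i j) = c • fun y => T y i j from rfl, fderiv_const_smul_field]
  rfl

theorem matDiv_sum_smul_vecMulVec {κ : Type*} (s : Finset κ) (g : κ → (Fin 3 → ℝ) → ℝ)
    (a d : κ → Fin 3 → ℝ) (x : Fin 3 → ℝ) (hg : ∀ k ∈ s, DifferentiableAt ℝ (g k) x) :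
    matDiv (fun y => ∑ k ∈ s, g k y • Matrix.vecMulVec (a k) (d k)) x
      = ∑ k ∈ s, fderiv ℝ (g k) x (d k) • a k := by
  ext i
  have hentry (j : Fin 3) :
      fderiv ℝ (fun y => (∑ k ∈ s, g k y • Matrix.vecMulVec (a k) (d k)) i j) x
        = ∑ k ∈ s, (a k i * d k j) • fderiv ℝ (g k) x := by
    simp only [Matrix.sum_apply, Matrix.smul_apply, Matrix.vecMulVec_apply, smul_eq_mul]
    exact (HasFDerivAt.fun_sum fun k hk =>
      (hg k hk).hasFDerivAt.mul_const (a k i * d k j)).fderiv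
  simp only [matDiv, hentry, FunLike.coe_sum, Finset.sum_apply, FunLike.coe_smul, Pi.smul_apply,
    smul_eq_mul]
  rw [Finset.sum_comm]
  refine Finset.sum_congr rfl fun k _ => ?_
  conv_rhs => rw [pi_eq_sum_univ' (d k), map_sum, Finset.sum_mul]
  refine Finset.sum_congr rfl fun j _ => ?_
  rw [map_smul, smul_eq_mul]
  ring

end MatDiv

section BondFunction

open AffineMap

variable {w : (Fin 3 → ℝ) → ℝ}

theorem bondFunction_eq_integral_lineMap (x u v : Fin 3 → ℝ) :
    bondFunction w x u v = ∫ s in (0:ℝ)..1, w (lineMap u v s - x) := by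
  simp only [bondFunction, lineMap_apply_module]

theorem hasFDerivAt_bondFunction (hw : ContDiff ℝ 1 w) (u v x₀ : Fin 3 → ℝ) :
    HasFDerivAt (fun x => bondFunction w x u v)
      (∫ s in (0:ℝ)..1, -fderiv ℝ w (lineMap u v s - x₀)) x₀ := by
  simp only [bondFunction_eq_integral_lineMap]
  exact hasFDerivAt_intervalIntegral_comp_sub hw lineMap_continuous 0 1 x₀

theorem fderiv_bondFunction_apply_sub (hw : ContDiff ℝ 1 w) (u v x₀ : Fin 3 → ℝ) :
    fderiv ℝ (fun x => bondFunction w x u v) x₀ (u - v) = w (v - x₀) - w (u - x₀) := by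
  have hint : IntervalIntegrable (fun s => -fderiv ℝ w (lineMap u v s - x₀)) volume 0 1 :=
    ((hw.continuous_fderiv one_ne_zero).comp
      (lineMap_continuous.sub continuous_const)).neg.intervalIntegrable 0 1
  rw [(hasFDerivAt_bondFunction hw u v x₀).fderiv, ContinuousLinearMap.intervalIntegral_apply hint]
  simp only [neg_apply, ← map_neg, neg_sub]
  rw [integral_fderiv_apply_eq_sub_of_hasDerivAt hw (fun s => hasDerivAt_lineMap.sub_const x₀)
    continuous_const]
  simp

end BondFunction

section OffDiag

variable {ι : Type*}

theorem Finset.sum_sum_erase_eq_sum_offDiag {M : Type*} [DecidableEq ι] [AddCommMonoid M]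
    (s : Finset ι) (F : ι → ι → M) :
    ∑ a ∈ s, ∑ b ∈ s.erase a, F a b = ∑ p ∈ s.offDiag, F p.1 p.2 :=
  (Finset.sum_finset_product (f := fun p => F p.1 p.2) _ _ _ fun p => by
    simp only [Finset.mem_offDiag, Finset.mem_erase]; tauto).symm

theorem Finset.sum_offDiag_smul_snd_eq_neg {R M : Type*} [Semiring R] [AddCommGroup M]
    [Module R M] (s : Finset ι) (φ : ι → R) {f : ι × ι → M}
    (hf : ∀ a b, a ≠ b → f (a, b) = -f (b, a)) :
    ∑ p ∈ s.offDiag, φ p.2 • f p = -∑ p ∈ s.offDiag, φ p.1 • f p := by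
  rw [← Finset.sum_neg_distrib]
  refine Finset.sum_nbij' Prod.swap Prod.swap (by grind) (by grind) (by simp) (by simp) ?_
  rintro ⟨a, b⟩ hab
  simp [hf a b (Finset.mem_offDiag.1 hab).2.2]

end OffDiag

/-- **The Hardy stress satisfies the pointwise force balance.**
For antisymmetric interaction forces `f` and a `C¹` weighting function `w`, the Hardy
stress field `σ(x̄) = (1/2) Σ_{α≠β} [−f(α,β) ⊗ (x_α − x_β)] b(xv; x_α, x_β)` satisfies
`div σ(x̄) = Σ_{α≠β} w(x_α − xv) f(α,β)` at every point `xv`. -/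
theorem hardy_stress_force_balance
    {ι : Type*} [Fintype ι] [DecidableEq ι]
    (x : ι → (Fin 3 → ℝ)) (f : ι × ι → (Fin 3 → ℝ))
    (hanti : ∀ α β, α ≠ β → f (α, β) = -f (β, α))
    (w : (Fin 3 → ℝ) → ℝ) (hw : ContDiff ℝ 1 w) :
    ∀ xb : Fin 3 → ℝ,
      matDiv (fun xv => (1 / 2 : ℝ) •
          ∑ α, ∑ β ∈ Finset.univ.erase α,
            bondFunction w xv (x α) (x β) • Matrix.vecMulVec (-f (α, β)) (x α - x β)) xb
        = ∑ α, ∑ β ∈ Finset.univ.erase α, w (x α - xb) • f (α, β) := by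
  intro xb
  simp only [Finset.sum_sum_erase_eq_sum_offDiag]
  rw [matDiv_const_smul, matDiv_sum_smul_vecMulVec _ _ _ _ _
    fun p _ => (hasFDerivAt_bondFunction hw _ _ xb).differentiableAt]
  have hswap := Finset.sum_offDiag_smul_snd_eq_neg Finset.univ (fun a => w (x a - xb)) hanti
  simp only [fderiv_bondFunction_apply_sub hw, Prod.mk.eta, sub_smul, smul_neg, neg_sub,
    Finset.sum_sub_distrib, hswap]
  module
end

section
/- (Continuity equation for the Murdoch–Hardy spatially averaged fields.) Let ι be a finite index set, m_α > 0 masses, x_α : ℝ → ℝ³ continuously differentiable particle trajectories with velocities v_α = ẋ_α, and let w : ℝ³ → ℝ be continuously differentiable. Define the smeared density ρ̃(x,t) := Σ_α m_α w(x_α(t) − x) and the smeared momentum density p̃(x,t) := Σ_α m_α v_α(t) w(x_α(t) − x). Then at every (x,t), ∂ρ̃/∂t (x,t) + div_x p̃ (x,t) = 0. -/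
/-!
The identity is linear in the particles, so it suffices to check it for one particle `α` with
velocity `v = ẋ_α(t)`. By the chain rule `∂ₜ w(x_α(t) − x) = Dw(x_α(t) − x) v`, while
`∂_{x_j} (v_j w(x_α(t) − x)) = −v_j Dw(x_α(t) − x) e_j`; summing over `j` reassembles
`−Dw(x_α(t) − x) v`, which cancels the time derivative.
-/

open Finset

theorem HasFDerivAt.comp_const_sub {𝕜 E F : Type*} [NontriviallyNormedField 𝕜]
    [NormedAddCommGroup E] [NormedSpace 𝕜 E] [NormedAddCommGroup F] [NormedSpace 𝕜 F]
    {f : E → F} {f' : E →L[𝕜] F} {a x : E} (hf : HasFDerivAt f f' (a - x)) :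
    HasFDerivAt (fun y => f (a - y)) (-f') x := by
  simpa [Function.comp_def] using hf.comp x ((hasFDerivAt_id x).const_sub a)

theorem LinearMap.sum_smul_apply_single {ι R M : Type*} [Fintype ι] [DecidableEq ι]
    [CommSemiring R] [AddCommMonoid M] [Module R M] (f : (ι → R) →ₗ[R] M) (v : ι → R) :
    ∑ i, v i • f (Pi.single i 1) = f v := by
  conv_rhs => rw [pi_eq_sum_univ' v, map_sum]
  simp only [map_smul]

theorem particle_continuity_equation {ι : Type*} [Fintype ι] [DecidableEq ι] (m : ℝ)
    {γ : ℝ → ι → ℝ} {w : (ι → ℝ) → ℝ} {c : ι → ℝ} {t : ℝ} (hγ : DifferentiableAt ℝ γ t)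
    (hw : DifferentiableAt ℝ w (γ t - c)) :
    deriv (fun τ => m * w (γ τ - c)) t
      + ∑ j, fderiv ℝ (fun y => m * deriv γ t j * w (γ t - y)) c (Pi.single j 1) = 0 := by
  set L := fderiv ℝ w (γ t - c)
  have htime : deriv (fun τ => m * w (γ τ - c)) t = m * L (deriv γ t) :=
    ((hw.hasFDerivAt.comp_hasDerivAt t (hγ.hasDerivAt.sub_const c)).const_mul m).deriv
  have hspace (j : ι) :
      fderiv ℝ (fun y => m * deriv γ t j * w (γ t - y)) c (Pi.single j 1)
        = -(m * (deriv γ t j • L (Pi.single j 1))) := by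
    rw [(hw.hasFDerivAt.comp_const_sub.const_mul _).fderiv]
    simp only [smul_apply, neg_apply, smul_eq_mul]
    ring
  have hL := (L : (ι → ℝ) →ₗ[ℝ] ℝ).sum_smul_apply_single (deriv γ t)
  simp only [ContinuousLinearMap.coe_coe] at hL
  rw [htime, sum_congr rfl fun j _ => hspace j, sum_neg_distrib, ← mul_sum, hL, add_neg_cancel]

theorem murdoch_hardy_continuity_equation_general
    {ι : Type*} [Fintype ι]
    (m : ι → ℝ)
    (x : ι → ℝ → (Fin 3 → ℝ)) (hx : ∀ α, ContDiff ℝ 1 (x α))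
    (w : (Fin 3 → ℝ) → ℝ) (hw : ContDiff ℝ 1 w) :
    ∀ (xv : Fin 3 → ℝ) (t : ℝ),
      deriv (fun τ => ∑ α, m α * w (x α τ - xv)) t
        + ∑ j : Fin 3, fderiv ℝ
            (fun y => ∑ α, m α * deriv (x α) t j * w (x α t - y)) xv (Pi.single j 1)
        = 0 := by
  intro xv t
  have hw' : Differentiable ℝ w := hw.differentiable one_ne_zero
  have hx' (α : ι) : Differentiable ℝ (x α) := (hx α).differentiable one_ne_zero
  rw [deriv_fun_sum fun α _ => by fun_prop]
  have hflux (j : Fin 3) :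
      fderiv ℝ (fun y => ∑ α, m α * deriv (x α) t j * w (x α t - y)) xv
        = ∑ α, fderiv ℝ (fun y => m α * deriv (x α) t j * w (x α t - y)) xv :=
    fderiv_fun_sum fun α _ => by fun_prop
  simp_rw [hflux, _root_.sum_apply]
  rw [sum_comm, ← sum_add_distrib]
  exact sum_eq_zero fun α _ => particle_continuity_equation (m α) (hx' α t) (hw' _)

/-- **Continuity equation for the Murdoch–Hardy spatially averaged
fields.** For `C¹` particle trajectories `x_α` with masses `m_α > 0` and a `C¹`
weighting function `w`, the smeared density `ρ̃(x,t) = Σ_α m_α w(x_α(t) − x)` and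
smeared momentum density `p̃(x,t) = Σ_α m_α v_α(t) w(x_α(t) − x)` satisfy
`∂ρ̃/∂t + div_x p̃ = 0` at every point and time. -/
theorem murdoch_hardy_continuity_equation
    {ι : Type*} [Fintype ι]
    (m : ι → ℝ) (hm : ∀ α, 0 < m α)
    (x : ι → ℝ → (Fin 3 → ℝ)) (hx : ∀ α, ContDiff ℝ 1 (x α))
    (w : (Fin 3 → ℝ) → ℝ) (hw : ContDiff ℝ 1 w) :
    ∀ (xv : Fin 3 → ℝ) (t : ℝ),
      deriv (fun τ => ∑ α, m α * w (x α τ - xv)) t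
        + ∑ j : Fin 3, fderiv ℝ
            (fun y => ∑ α, m α * deriv (x α) t j * w (x α t - y)) xv (Pi.single j 1)
        = 0 :=
  murdoch_hardy_continuity_equation_general m x hx w hw
end
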